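/- If φ is two-point contractible on a closed forward-invariant set K, then for every x, y ∈ K, almost surely there is an unbounded sequence of times (t_n) with d(φ(t_n,ω)x, φ(t_n,ω)y) → 0 as n → ∞. -/

import Mathlib

open MeasureTheory ProbabilityTheory Filter Topology

/-- A (discrete-time) filtered random dynamical system over a memoryless stationary
noise space, on a metric space `X`. -/
structure MRDS (Ω X : Type*) [mΩ : MeasurableSpace Ω] [MetricSpace X]
    [mX : MeasurableSpace X] [BorelSpace X] where
  P : Measure Ω
  hprob : IsProbabilityMeasure P
  F : ℕ → MeasurableSpace Ω
  hle : ∀ t, F t ≤ mΩ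
  hmono : Monotone F
  θ : ℕ → Ω → Ω
  hθ0 : θ 0 = id
  hθadd : ∀ s t, θ (s + t) = θ s ∘ θ t
  hθmeas : ∀ s t, @Measurable Ω Ω (F (s + t)) (F s) (θ t)
  hθpres : ∀ t, MeasurePreserving (θ t) P P
  memless : ∀ s, Indep (F s) ((⨆ t, F t).comap (θ s)) P
  φ : ℕ → Ω → X → X
  hφcont : ∀ t ω, Continuous (φ t ω)
  hφmeas : ∀ t, @Measurable (Ω × X) X ((F t).prod mX) mX (fun p => φ t p.1 p.2)
  hφ0 : ∀ ω, φ 0 ω = id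
  hφcocycle : ∀ s t ω, φ (s + t) ω = φ t (θ s ω) ∘ φ s ω

namespace MRDS

variable {Ω X : Type*} [MeasurableSpace Ω] [MetricSpace X]
  [MeasurableSpace X] [BorelSpace X]

/-- The one-point transition probabilities `φ_x^t`. -/
noncomputable def law (R : MRDS Ω X) (x : X) (t : ℕ) : Measure X :=
  R.P.map (fun ω => R.φ t ω x)

/-- A closed set that is forward-invariant for the one-point transition probabilities. -/
def FwdInv (R : MRDS Ω X) (K : Set X) : Prop :=
  IsClosed K ∧ ∀ x ∈ K, ∀ t, R.law x t K = 1

/-- A minimal set: non-empty, closed, forward-invariant, with no proper non-empty closed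
forward-invariant subsets. -/
def Minimal (R : MRDS Ω X) (K : Set X) : Prop :=
  K.Nonempty ∧ R.FwdInv K ∧ ∀ K' ⊆ K, R.FwdInv K' → K' = K ∨ K' = ∅

/-- `A` contracts under the noise realisation `ω`. -/
def contracts (R : MRDS Ω X) (ω : Ω) (A : Set X) : Prop :=
  Tendsto (fun t => EMetric.diam (R.φ t ω '' A)) atTop (𝓝 0)

/-- `(ω, x)` is an asymptotically stable pair. -/
def stablePair (R : MRDS Ω X) (ω : Ω) (x : X) : Prop :=
  ∃ U ∈ 𝓝 x, R.contracts ω U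

/-- The set of asymptotically stable pairs. -/
def O (R : MRDS Ω X) : Set (Ω × X) := {p | R.stablePair p.1 p.2}

/-- The set of noise realisations under which `U` contracts. -/
def EU (R : MRDS Ω X) (U : Set X) : Set Ω := {ω | R.contracts ω U}

/-- `x` is potentially stable. -/
def potStable (R : MRDS Ω X) (x : X) : Prop := 0 < R.P {ω | R.stablePair ω x}

/-- `x` is almost surely stable. -/
def asStable (R : MRDS Ω X) (x : X) : Prop := R.P {ω | R.stablePair ω x} = 1

/-- `φ` is globally synchronising. -/
def synchronising (R : MRDS Ω X) : Prop :=
  ∀ x y : X,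
    R.P {ω | Tendsto (fun t => dist (R.φ t ω x) (R.φ t ω y)) atTop (𝓝 0)} = 1

/-- `φ` is stably synchronising. -/
def stablySynchronising (R : MRDS Ω X) : Prop :=
  R.synchronising ∧ ∀ x : X, R.asStable x

/-- `ρ` is a stationary measure for the one-point transition probabilities. -/
def stationary (R : MRDS Ω X) (ρ : Measure X) : Prop :=
  ∀ t, ∀ A : Set X, MeasurableSet A → ∫⁻ x, R.law x t A ∂ρ = ρ A

end MRDS


/-! Two-point contractibility says that from every pair in `K × K` the trajectories come
`ε`-close with positive probability, hence within some finite horizon `T`. Since the hitting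
probability before time `T` is lower semicontinuous in the starting pair, compactness of `K × K`
makes both `T` and a lower bound `δ > 0` uniform. By the Markov property (the cocycle identity
together with the independence of the future noise from the past), the probability of staying
`ε`-apart during `m` consecutive windows of length `T` is at most `(1 - δ) ^ m`. Hence almost
surely the trajectories come `ε`-close at arbitrarily late times, for every `ε = 1/(k+1)`, and a
diagonal extraction yields the subsequence. -/

open scoped ENNReal

theorem lowerSemicontinuous_lintegral {α Ω : Type*} [TopologicalSpace α]
    [FirstCountableTopology α] [MeasurableSpace Ω] (μ : Measure Ω) {f : α → Ω → ℝ≥0∞}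
    (hf : ∀ ω, LowerSemicontinuous fun a => f a ω) (hmeas : ∀ a, Measurable (f a)) :
    LowerSemicontinuous fun a => ∫⁻ ω, f a ω ∂μ := by
  refine lowerSemicontinuous_iff_le_liminf.2 fun a => ?_
  calc ∫⁻ ω, f a ω ∂μ ≤ ∫⁻ ω, liminf (fun a' => f a' ω) (𝓝 a) ∂μ :=
        lintegral_mono fun ω => lowerSemicontinuous_iff_le_liminf.1 (hf ω) a
    _ ≤ liminf (fun a' => ∫⁻ ω, f a' ω ∂μ) (𝓝 a) := lintegral_liminf_le hmeas

theorem IsCompact.exists_pos_forall_le_of_lowerSemicontinuous {α : Type*}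
    [TopologicalSpace α] {s : Set α} (hs : IsCompact s) {q : ℕ → α → ℝ≥0∞} (hq : Monotone q)
    (hlsc : ∀ n, LowerSemicontinuous (q n)) (hpos : ∀ p ∈ s, ∃ n, 0 < q n p) :
    ∃ n, ∃ δ > 0, ∀ p ∈ s, δ ≤ q n p := by
  set U : ℕ → Set α := fun n => q n ⁻¹' Set.Ioi ((n + 1 : ℝ≥0∞)⁻¹)
  have hU_mono : Monotone U := fun m n hmn p (hp : _ < _) =>
    lt_of_le_of_lt (ENNReal.inv_le_inv.2 (by gcongr)) (hp.trans_le (hq hmn p))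
  have hcover : s ⊆ ⋃ n, U n := fun p hp => by
    obtain ⟨n, hn⟩ := hpos p hp
    obtain ⟨m, hm⟩ := ENNReal.exists_inv_nat_lt hn.ne'
    refine Set.mem_iUnion.2 ⟨max n m, ?_⟩
    calc ((max n m : ℕ) + 1 : ℝ≥0∞)⁻¹ ≤ (m : ℝ≥0∞)⁻¹ :=
          ENNReal.inv_le_inv.2 (by exact_mod_cast (le_max_right n m).trans (Nat.le_succ _))
      _ < q n p := hm
      _ ≤ q (max n m) p := hq (le_max_left n m) p
  obtain ⟨n, hn⟩ := hs.elim_directed_cover U (fun n => (hlsc n).isOpen_preimage _)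
    hcover hU_mono.directed_le
  exact ⟨n, _, ENNReal.inv_pos.2 (ENNReal.add_ne_top.2 ⟨ENNReal.natCast_ne_top n,
    ENNReal.one_ne_top⟩), fun p hp => (hn hp).le⟩

theorem ProbabilityTheory.IndepFun.measure_mem_eq_lintegral {Ω α β : Type*}
    {mΩ : MeasurableSpace Ω} [mα : MeasurableSpace α] [mβ : MeasurableSpace β] {μ : Measure Ω}
    [IsFiniteMeasure μ] {f : Ω → α} {g : Ω → β} (hfg : IndepFun f g μ) (hf : Measurable f)
    (hg : Measurable g) {S : Set (α × β)} (hS : MeasurableSet S) :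
    μ {ω | (f ω, g ω) ∈ S} = ∫⁻ ω, μ {ω' | (f ω', g ω) ∈ S} ∂μ := by
  calc μ {ω | (f ω, g ω) ∈ S} = (μ.map f).prod (μ.map g) S := by
        rw [← (indepFun_iff_map_prod_eq_prod_map_map hf.aemeasurable hg.aemeasurable).1 hfg,
          Measure.map_apply (hf.prodMk hg) hS]
        rfl
    _ = ∫⁻ ω, μ.map f ((fun a => (a, g ω)) ⁻¹' S) ∂μ := by
        rw [Measure.prod_apply_symm hS, lintegral_map (measurable_measure_prodMk_right hS) hg]
    _ = ∫⁻ ω, μ {ω' | (f ω', g ω) ∈ S} ∂μ := by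
        simp_rw [Measure.map_apply hf (measurable_prodMk_right hS)]
        rfl

namespace MRDS

variable {Ω X : Type*} [mΩ : MeasurableSpace Ω] [MetricSpace X] [MeasurableSpace X]
  [BorelSpace X] (R : MRDS Ω X)

def hitSet (ε : ℝ) (T : ℕ) (a b : X) : Set Ω :=
  {ω | ∃ u < T, dist (R.φ u ω a) (R.φ u ω b) < ε}

def apartOn (ε : ℝ) (x y : X) (I : Set ℕ) : Set Ω :=
  {ω | ∀ t ∈ I, ε ≤ dist (R.φ t ω x) (R.φ t ω y)}

theorem apartOn_anti (ε : ℝ) (x y : X) {I J : Set ℕ} (hIJ : I ⊆ J) :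
    R.apartOn ε x y J ⊆ R.apartOn ε x y I :=
  fun _ hω t ht => hω t (hIJ ht)

theorem measurable_φ_apply (t : ℕ) (a : X) : Measurable[R.F t] fun ω => R.φ t ω a :=
  (R.hφmeas t).comp (measurable_id.prodMk measurable_const)

theorem measurable_dist_φ [SecondCountableTopology X] (t : ℕ) (a b : X) :
    Measurable[R.F t] fun ω => dist (R.φ t ω a) (R.φ t ω b) :=
  measurable_dist.comp ((R.measurable_φ_apply t a).prodMk (R.measurable_φ_apply t b))

theorem measurableSet_apartOn [SecondCountableTopology X] (ε : ℝ) (x y : X) {I : Set ℕ}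
    {N : ℕ} (hI : ∀ t ∈ I, t ≤ N) : MeasurableSet[R.F N] (R.apartOn ε x y I) := by
  have : R.apartOn ε x y I = ⋂ t ∈ I, (fun ω => dist (R.φ t ω x) (R.φ t ω y)) ⁻¹' Set.Ici ε := by
    ext; simp [apartOn]
  rw [this]
  exact MeasurableSet.biInter I.to_countable fun t ht =>
    R.hmono (hI t ht) _ (R.measurable_dist_φ t x y measurableSet_Ici)

theorem isOpen_setOf_mem_hitSet (ε : ℝ) (T : ℕ) (ω : Ω) :
    IsOpen {p : X × X | ω ∈ R.hitSet ε T p.1 p.2} := by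
  have : {p : X × X | ω ∈ R.hitSet ε T p.1 p.2} =
      ⋃ u < T, (fun p : X × X => dist (R.φ u ω p.1) (R.φ u ω p.2)) ⁻¹' Set.Iio ε := by
    ext; simp [hitSet]
  rw [this]
  exact isOpen_biUnion fun u _ => isOpen_Iio.preimage
    (((R.hφcont u ω).comp continuous_fst).dist ((R.hφcont u ω).comp continuous_snd))

theorem measurableSet_setOf_mem_hitSet [SecondCountableTopology X] (ε : ℝ) (T : ℕ) :
    MeasurableSet[(⨆ t, R.F t).prod inferInstance]
      {q : Ω × X × X | q.1 ∈ R.hitSet ε T q.2.1 q.2.2} := by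
  have : {q : Ω × X × X | q.1 ∈ R.hitSet ε T q.2.1 q.2.2} =
      ⋃ u < T, (fun q : Ω × X × X => dist (R.φ u q.1 q.2.1) (R.φ u q.1 q.2.2)) ⁻¹' Set.Iio ε := by
    ext; simp [hitSet]
  rw [this]
  refine MeasurableSet.biUnion (Set.to_countable _) fun u _ => ?_
  have hfst : Measurable[(⨆ t, R.F t).prod inferInstance, R.F u] (Prod.fst : Ω × X × X → Ω) :=
    measurable_fst.mono le_rfl (le_iSup R.F u)
  have hφ : ∀ g : X × X → X, Measurable g →
      Measurable[(⨆ t, R.F t).prod inferInstance] fun q : Ω × X × X => R.φ u q.1 (g q.2) :=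
    fun g hg => (R.hφmeas u).comp (hfst.prodMk (hg.comp measurable_snd))
  exact measurable_dist.comp ((hφ _ measurable_fst).prodMk (hφ _ measurable_snd))
    measurableSet_Iio

theorem measurableSet_hitSet [SecondCountableTopology X] (ε : ℝ) (T : ℕ) (a b : X) :
    MeasurableSet (R.hitSet ε T a b) :=
  (R.measurableSet_setOf_mem_hitSet ε T).preimage (f := fun ω => (ω, a, b))
    ((measurable_id.mono (iSup_le R.hle) le_rfl).prodMk measurable_const)

theorem exists_pos_le_measure_hitSet [SecondCountableTopology X] {K : Set X} (hK : IsCompact K)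
    {ε : ℝ} (hcontr : ∀ a ∈ K, ∀ b ∈ K, 0 < R.P {ω | ∃ t, dist (R.φ t ω a) (R.φ t ω b) < ε}) :
    ∃ T, ∃ δ > 0, ∀ a ∈ K, ∀ b ∈ K, δ ≤ R.P (R.hitSet ε T a b) := by
  have hmono : Monotone fun T (p : X × X) => R.P (R.hitSet ε T p.1 p.2) :=
    fun T T' hT p => measure_mono fun ω ⟨u, hu, hd⟩ => ⟨u, hu.trans_le hT, hd⟩
  have hlsc : ∀ T, LowerSemicontinuous fun p : X × X => R.P (R.hitSet ε T p.1 p.2) := by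
    intro T
    simp_rw [← lintegral_indicator_one (R.measurableSet_hitSet ε T _ _)]
    exact lowerSemicontinuous_lintegral R.P
      (fun ω => (R.isOpen_setOf_mem_hitSet ε T ω).lowerSemicontinuous_indicator zero_le_one)
      (fun p => measurable_one.indicator (R.measurableSet_hitSet ε T p.1 p.2))
  have hpos : ∀ p ∈ K ×ˢ K, ∃ T, 0 < R.P (R.hitSet ε T p.1 p.2) := by
    rintro ⟨a, b⟩ ⟨ha, hb⟩
    by_contra! h
    have hsub : {ω | ∃ t, dist (R.φ t ω a) (R.φ t ω b) < ε} ⊆ ⋃ T, R.hitSet ε T a b :=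
      fun ω ⟨t, ht⟩ => Set.mem_iUnion.2 ⟨t + 1, t, t.lt_succ_self, ht⟩
    exact (hcontr a ha b hb).ne'
      (measure_mono_null hsub (measure_iUnion_null fun T => nonpos_iff_eq_zero.1 (h T)))
  obtain ⟨T, δ, hδ, hle⟩ :=
    (hK.prod hK).exists_pos_forall_le_of_lowerSemicontinuous hmono hlsc hpos
  exact ⟨T, δ, hδ, fun a ha b hb => hle (a, b) ⟨ha, hb⟩⟩

theorem measure_shift_mem (r : ℕ) {S : Set (Ω × Ω)}
    (hS : MeasurableSet[(⨆ t, R.F t).prod (R.F r)] S) :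
    R.P {ω | (R.θ r ω, ω) ∈ S} = ∫⁻ ω, R.P {ω' | (ω', ω) ∈ S} ∂ R.P := by
  have := R.hprob
  have hθ : Measurable[mΩ, ⨆ t, R.F t] (R.θ r) := by
    rw [measurable_iff_comap_le, MeasurableSpace.comap_iSup]
    exact iSup_le fun t => (measurable_iff_comap_le.1 (R.hθmeas t r)).trans (R.hle (t + r))
  have hindep := (IndepFun_iff_Indep (mβ := ⨆ t, R.F t) (mγ := R.F r) (R.θ r) id R.P).2
    (by rw [MeasurableSpace.comap_id]; exact (R.memless r).symm)
  refine (hindep.measure_mem_eq_lintegral (mα := ⨆ t, R.F t) (mβ := R.F r) hθ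
    (measurable_id.mono le_rfl (R.hle r)) hS).trans
    (lintegral_congr fun ω => (R.hθpres r).measure_preimage (s := {ω' | (ω', ω) ∈ S}) ?_)
  exact (iSup_le R.hle _ (measurable_prodMk_right hS)).nullMeasurableSet

theorem ae_φ_mem {K : Set X} (hK : R.FwdInv K) {x : X} (hx : x ∈ K) (t : ℕ) :
    ∀ᵐ ω ∂ R.P, R.φ t ω x ∈ K := by
  have := R.hprob
  have hmeas : Measurable fun ω => R.φ t ω x := (R.measurable_φ_apply t x).mono (R.hle t) le_rfl
  have hlaw := hK.2 x hx t
  rw [law, Measure.map_apply hmeas hK.1.measurableSet] at hlaw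
  exact ae_iff.2 ((prob_compl_eq_zero_iff (hmeas hK.1.measurableSet)).2 hlaw)

theorem apartOn_Ico_add (ε : ℝ) (x y : X) {s r : ℕ} (hsr : s ≤ r) (T : ℕ) :
    R.apartOn ε x y (Set.Ico s (r + T)) = R.apartOn ε x y (Set.Ico s r) ∩
      {ω | R.θ r ω ∉ R.hitSet ε T (R.φ r ω x) (R.φ r ω y)} := by
  ext ω
  have hco : ∀ u z, R.φ u (R.θ r ω) (R.φ r ω z) = R.φ (r + u) ω z := fun u z => by
    rw [R.hφcocycle]; rfl
  simp only [apartOn, hitSet, Set.mem_inter_iff, Set.mem_ofPred_eq, Set.mem_Ico, hco,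
    not_exists, not_and, not_lt]
  constructor
  · intro h
    exact ⟨fun t ht => h t ⟨ht.1, by omega⟩, fun u hu => h (r + u) ⟨by omega, by omega⟩⟩
  · rintro ⟨hbefore, hafter⟩ t ⟨hst, htT⟩
    rcases lt_or_ge t r with htr | htr
    · exact hbefore t ⟨hst, htr⟩
    · obtain ⟨u, rfl⟩ := Nat.exists_eq_add_of_le htr
      exact hafter u (by omega)

variable {K : Set X} {ε : ℝ} {x y : X}

theorem measure_apartOn_Ico_add_le [SecondCountableTopology X] (hK : R.FwdInv K) {T : ℕ} {δ : ℝ≥0∞}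
    (hδ : ∀ a ∈ K, ∀ b ∈ K, δ ≤ R.P (R.hitSet ε T a b)) (hx : x ∈ K) (hy : y ∈ K)
    {s r : ℕ} (hsr : s ≤ r) :
    R.P (R.apartOn ε x y (Set.Ico s (r + T))) ≤
      (1 - δ) * R.P (R.apartOn ε x y (Set.Ico s r)) := by
  have := R.hprob
  set A := R.apartOn ε x y (Set.Ico s r)
  have hA : MeasurableSet[R.F r] A := R.measurableSet_apartOn ε x y fun t ht => ht.2.le
  set S : Set (Ω × Ω) := {q | q.2 ∈ A ∧ q.1 ∉ R.hitSet ε T (R.φ r q.2 x) (R.φ r q.2 y)}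
  have hS : MeasurableSet[(⨆ t, R.F t).prod (R.F r)] S := by
    have hφ : ∀ z, Measurable[(⨆ t, R.F t).prod (R.F r)] fun q : Ω × Ω => R.φ r q.2 z :=
      fun z => (R.measurable_φ_apply r z).comp measurable_snd
    exact (measurable_snd hA).inter ((R.measurableSet_setOf_mem_hitSet ε T).preimage
      (measurable_fst.prodMk ((hφ x).prodMk (hφ y)))).compl
  have hslice : ∀ ω, R.P {ω' | (ω', ω) ∈ S} =
      A.indicator (fun ω => R.P (R.hitSet ε T (R.φ r ω x) (R.φ r ω y))ᶜ) ω := by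
    intro ω
    by_cases hω : ω ∈ A <;> simp [S, hω, Set.compl_def]
  calc R.P (R.apartOn ε x y (Set.Ico s (r + T))) = R.P {ω | (R.θ r ω, ω) ∈ S} := by
        rw [R.apartOn_Ico_add ε x y hsr T]; rfl
    _ = ∫⁻ ω, A.indicator (fun ω => R.P (R.hitSet ε T (R.φ r ω x) (R.φ r ω y))ᶜ) ω ∂ R.P := by
        rw [R.measure_shift_mem r hS]; simp_rw [hslice]
    _ ≤ ∫⁻ ω, A.indicator (fun _ => 1 - δ) ω ∂ R.P := by
        refine lintegral_mono_ae ?_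
        filter_upwards [R.ae_φ_mem hK hx r, R.ae_φ_mem hK hy r] with ω hωx hωy
        refine Set.indicator_le_indicator ?_
        rw [prob_compl_eq_one_sub (R.measurableSet_hitSet ε T _ _)]
        exact tsub_le_tsub_left (hδ _ hωx _ hωy) 1
    _ = (1 - δ) * R.P A := lintegral_indicator_const (R.hle r _ hA) _

theorem measure_apartOn_Ico_le_pow [SecondCountableTopology X] (hK : R.FwdInv K) {T : ℕ} {δ : ℝ≥0∞}
    (hδ : ∀ a ∈ K, ∀ b ∈ K, δ ≤ R.P (R.hitSet ε T a b)) (hx : x ∈ K) (hy : y ∈ K)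
    (s m : ℕ) : R.P (R.apartOn ε x y (Set.Ico s (s + m * T))) ≤ (1 - δ) ^ m := by
  have := R.hprob
  induction m with
  | zero => simpa using prob_le_one
  | succ m ih =>
    calc R.P (R.apartOn ε x y (Set.Ico s (s + (m + 1) * T)))
        = R.P (R.apartOn ε x y (Set.Ico s (s + m * T + T))) := by rw [add_mul, one_mul, add_assoc]
      _ ≤ (1 - δ) * R.P (R.apartOn ε x y (Set.Ico s (s + m * T))) :=
        R.measure_apartOn_Ico_add_le hK hδ hx hy (Nat.le_add_right _ _)
      _ ≤ (1 - δ) * (1 - δ) ^ m := by gcongr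
      _ = (1 - δ) ^ (m + 1) := (pow_succ' _ _).symm

theorem ae_frequently_dist_lt [CompactSpace X] (hK : R.FwdInv K)
    (hcontr : ∀ a ∈ K, ∀ b ∈ K, 0 < R.P {ω | ∃ t, dist (R.φ t ω a) (R.φ t ω b) < ε})
    (hx : x ∈ K) (hy : y ∈ K) :
    ∀ᵐ ω ∂ R.P, ∃ᶠ t in atTop, dist (R.φ t ω x) (R.φ t ω y) < ε := by
  obtain ⟨T, δ, hδ, hhit⟩ := R.exists_pos_le_measure_hitSet hK.1.isCompact hcontr
  have hdecay : Tendsto (fun m : ℕ => (1 - δ) ^ m) atTop (𝓝 0) :=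
    ENNReal.tendsto_pow_atTop_nhds_zero_of_lt_one
      (ENNReal.sub_lt_self ENNReal.one_ne_top one_ne_zero hδ.ne')
  have hnull : ∀ s, R.P (R.apartOn ε x y (Set.Ici s)) = 0 := fun s =>
    le_antisymm (ge_of_tendsto' hdecay fun m =>
      (measure_mono (R.apartOn_anti ε x y Set.Ico_subset_Ici_self)).trans
        (R.measure_apartOn_Ico_le_pow hK hhit hx hy s m)) zero_le
  filter_upwards [ae_all_iff.2 fun s => measure_eq_zero_iff_ae_notMem.1 (hnull s)] with ω hω
  refine frequently_atTop.2 fun s => ?_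
  simpa [apartOn] using hω s

end MRDS

/-- If `φ` is two-point contractible on a closed forward-invariant set `K`, then for all
`x, y ∈ K`, almost surely there is an unbounded sequence of times along which the
distance between the two trajectories tends to `0`. -/
theorem stmt14 {Ω X : Type*} [MeasurableSpace Ω] [MetricSpace X] [CompactSpace X]
    [MeasurableSpace X] [BorelSpace X] (R : MRDS Ω X)
    (K : Set X) (hK : R.FwdInv K)
    (hcontr : ∀ x ∈ K, ∀ y ∈ K, ∀ ε > (0 : ℝ),
      0 < R.P {ω | ∃ t, dist (R.φ t ω x) (R.φ t ω y) < ε})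
    (x : X) (hx : x ∈ K) (y : X) (hy : y ∈ K) :
    ∀ᵐ ω ∂ R.P, ∃ u : ℕ → ℕ, StrictMono u ∧
      Tendsto (fun n => dist (R.φ (u n) ω x) (R.φ (u n) ω y)) atTop (𝓝 0) := by
  have hfreq : ∀ᵐ ω ∂ R.P, ∀ k : ℕ, ∃ᶠ t in atTop,
      dist (R.φ t ω x) (R.φ t ω y) < 1 / ((k : ℝ) + 1) := ae_all_iff.2 fun k =>
    R.ae_frequently_dist_lt hK (fun a ha b hb => hcontr a ha b hb _ Nat.one_div_pos_of_nat) hx hy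
  filter_upwards [hfreq] with ω hω
  obtain ⟨u, hu, hlt⟩ := extraction_forall_of_frequently hω
  exact ⟨u, hu, squeeze_zero (fun _ => dist_nonneg) (fun k => (hlt k).le)
    tendsto_one_div_add_atTop_nhds_zero_nat⟩
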